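/- arXiv:2506.00171 — 6 statements merged into one kernel-verified Lean document; each statement's English description precedes it below -/
import Mathlib

section
/- Let d ≥ 1, let m > 0 be a real number, and let D := [0, 1/m]^d ⊂ ℝ^d. Let g be twice continuously differentiable on an open neighborhood of D, let u ∈ L¹(D), and let α > 0 and C₀ > 0 be constants such that α·g(x) + Δg(x) + (1/m)·u(x) ≥ C₀/m for Lebesgue-almost every x ∈ D. Then (α/(2m)) ∫_D |g(x)| dx + ∫_D |∇g(x)| dx ≥ (C₀ / 2^{d+2}) · m^{-(d+2)} − (1/(2m²)) ∫_D |u(x)| dx. -/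
open MeasureTheory Real

/-- The Laplacian of `g : ℝ^d → ℝ`, i.e. the sum of the pure second partial derivatives. -/
noncomputable def lap {d : ℕ} (g : EuclideanSpace ℝ (Fin d) → ℝ) (x : EuclideanSpace ℝ (Fin d)) : ℝ :=
  ∑ i, fderiv ℝ (fun y => fderiv ℝ g y (EuclideanSpace.single i 1)) x (EuclideanSpace.single i 1)

/-!
Test the inequality against `φ(x) = ∏ᵢ ψ(xᵢ)` with `ψ(t) = 1 - (2mt - 1)² = 4mt(1 - mt)`. On `D`
the bump takes values in `[0, 1]`, it vanishes on `∂D`, and `(ψ')² = 16m²(1 - ψ)` gives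
`|∇φ| ≤ 4m`. Green's formula (the divergence theorem for `φ ∇g` on the box) turns `∫_D φ Δg` into
`-∫_D ∇φ · ∇g ≤ 4m ∫_D |∇g|`, so
`(C₀/m) ∫_D φ ≤ α ∫_D |g| + 4m ∫_D |∇g| + (1/m) ∫_D |u|`, and `∫_D φ = (2/(3m))^d ≥ (2m)^{-d}`.
-/

open Set
open scoped RealInnerProductSpace

theorem Finset.sum_one_sub_mul_prod_erase_le_one {ι : Type*} [DecidableEq ι] (s : Finset ι)
    {p : ι → ℝ} (hp0 : ∀ i, 0 ≤ p i) (hp1 : ∀ i, p i ≤ 1) :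
    ∑ i ∈ s, (1 - p i) * ∏ j ∈ s.erase i, p j ≤ 1 := by
  induction s using Finset.induction with
  | empty => simp
  | @insert k s hk ih =>
    have hsum : ∑ i ∈ s, (1 - p i) * ∏ j ∈ (insert k s).erase i, p j
        = p k * ∑ i ∈ s, (1 - p i) * ∏ j ∈ s.erase i, p j := by
      rw [Finset.mul_sum]
      refine Finset.sum_congr rfl fun i hi => ?_
      rw [Finset.erase_insert_of_ne (ne_of_mem_of_not_mem hi hk).symm,
        Finset.prod_insert fun h => hk (Finset.mem_of_mem_erase h)]
      ring
    have hprod : ∏ j ∈ s, p j ≤ 1 := Finset.prod_le_one (fun j _ => hp0 j) fun j _ => hp1 j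
    rw [Finset.sum_insert hk, Finset.erase_insert hk, hsum]
    nlinarith [hp0 k, hp1 k]

theorem Finset.sum_sq_mul_prod_erase_le {ι : Type*} [DecidableEq ι] (s : Finset ι)
    {p q : ι → ℝ} {c : ℝ} (hc : 0 ≤ c) (hp0 : ∀ i, 0 ≤ p i) (hp1 : ∀ i, p i ≤ 1)
    (hq : ∀ i, q i ^ 2 ≤ c * (1 - p i)) :
    ∑ i ∈ s, (q i * ∏ j ∈ s.erase i, p j) ^ 2 ≤ c := by
  have hterm : ∀ i, (q i * ∏ j ∈ s.erase i, p j) ^ 2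
      ≤ c * ((1 - p i) * ∏ j ∈ s.erase i, p j) := by
    intro i
    have h0 : 0 ≤ ∏ j ∈ s.erase i, p j := Finset.prod_nonneg fun j _ => hp0 j
    have h1 : ∏ j ∈ s.erase i, p j ≤ 1 :=
      Finset.prod_le_one (fun j _ => hp0 j) fun j _ => hp1 j
    calc (q i * ∏ j ∈ s.erase i, p j) ^ 2 = q i ^ 2 * (∏ j ∈ s.erase i, p j) ^ 2 := mul_pow ..
      _ ≤ c * (1 - p i) * ∏ j ∈ s.erase i, p j := by
          gcongr
          · nlinarith [hp1 i]
          · exact hq i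
          · nlinarith
      _ = c * ((1 - p i) * ∏ j ∈ s.erase i, p j) := mul_assoc ..
  calc ∑ i ∈ s, (q i * ∏ j ∈ s.erase i, p j) ^ 2
      ≤ ∑ i ∈ s, c * ((1 - p i) * ∏ j ∈ s.erase i, p j) := Finset.sum_le_sum fun i _ => hterm i
    _ = c * ∑ i ∈ s, (1 - p i) * ∏ j ∈ s.erase i, p j := (Finset.mul_sum ..).symm
    _ ≤ c := mul_le_of_le_one_right hc (s.sum_one_sub_mul_prod_erase_le_one hp0 hp1)

section

variable {d : ℕ}

theorem gradient_apply (f : EuclideanSpace ℝ (Fin d) → ℝ) (x : EuclideanSpace ℝ (Fin d))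
    (i : Fin d) : gradient f x i = fderiv ℝ f x (EuclideanSpace.single i 1) := by
  rw [← inner_gradient_left, EuclideanSpace.inner_single_right]
  simp

theorem norm_gradient_eq (f : EuclideanSpace ℝ (Fin d) → ℝ) (x : EuclideanSpace ℝ (Fin d)) :
    ‖gradient f x‖ = √(∑ i, (fderiv ℝ f x (EuclideanSpace.single i 1)) ^ 2) := by
  simp [EuclideanSpace.norm_eq, gradient_apply]

theorem inner_gradient_gradient (f g : EuclideanSpace ℝ (Fin d) → ℝ)
    (x : EuclideanSpace ℝ (Fin d)) :
    ⟪gradient f x, gradient g x⟫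
      = ∑ i, fderiv ℝ f x (EuclideanSpace.single i 1)
          * fderiv ℝ g x (EuclideanSpace.single i 1) := by
  rw [PiLp.inner_apply]
  simp only [gradient_apply, Real.inner_apply]

theorem ContDiffOn.continuousOn_gradient {f : EuclideanSpace ℝ (Fin d) → ℝ}
    {U : Set (EuclideanSpace ℝ (Fin d))} (hU : IsOpen U) (hf : ContDiffOn ℝ 1 f U) :
    ContinuousOn (gradient f) U :=
  (InnerProductSpace.toDual ℝ _).symm.continuous.comp_continuousOn
    (hf.continuousOn_fderiv_of_isOpen hU le_rfl)

theorem ContDiffOn.continuousOn_lap {g : EuclideanSpace ℝ (Fin d) → ℝ}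
    {U : Set (EuclideanSpace ℝ (Fin d))} (hU : IsOpen U) (hg : ContDiffOn ℝ 2 g U) :
    ContinuousOn (lap g) U := by
  have hdg : ContDiffOn ℝ 1 (fderiv ℝ g) U := hg.fderiv_of_isOpen hU (by norm_num)
  unfold lap
  exact continuousOn_finsetSum _ fun i _ =>
    ((hdg.clm_apply contDiffOn_const).continuousOn_fderiv_of_isOpen hU le_rfl).clm_apply
      continuousOn_const

theorem ContDiffOn.continuousOn_inner_gradient {g φ : EuclideanSpace ℝ (Fin d) → ℝ}
    {U : Set (EuclideanSpace ℝ (Fin d))} (hg : ContDiffOn ℝ 1 g U) (hU : IsOpen U)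
    (hφ : ContDiff ℝ 1 φ) : ContinuousOn (fun x => ⟪gradient φ x, gradient g x⟫) U :=
  ((hφ.contDiffOn.continuousOn_gradient isOpen_univ).mono (subset_univ U)).inner
    (hg.continuousOn_gradient hU)

/-- `div (φ ∇g) = φ Δg + ∇φ · ∇g`, with `∂ᵢ (φ ∂ᵢg)` expanded by the product rule. -/
theorem sum_fderiv_mul_partial_single (φ g : EuclideanSpace ℝ (Fin d) → ℝ)
    (x : EuclideanSpace ℝ (Fin d)) :
    ∑ i, (φ x • fderiv ℝ (fun y => fderiv ℝ g y (EuclideanSpace.single i 1)) x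
        + fderiv ℝ g x (EuclideanSpace.single i 1) • fderiv ℝ φ x) (EuclideanSpace.single i 1)
      = φ x * lap g x + ⟪gradient φ x, gradient g x⟫ := by
  rw [inner_gradient_gradient]
  simp only [FunLike.coe_add, FunLike.coe_smul, Pi.add_apply, Pi.smul_apply, smul_eq_mul,
    Finset.sum_add_distrib, lap, Finset.mul_sum]
  exact congrArg _ (Finset.sum_congr rfl fun i _ => mul_comm _ _)

theorem setIntegral_ofLp_preimage {G : Type*} [NormedAddCommGroup G] [NormedSpace ℝ G]
    (F : EuclideanSpace ℝ (Fin d) → G) (S : Set (Fin d → ℝ)) :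
    ∫ x in WithLp.ofLp ⁻¹' S, F x = ∫ y in S, F (WithLp.toLp 2 y) :=
  (PiLp.volume_preserving_ofLp _).setIntegral_preimage_emb
    (MeasurableEquiv.toLp 2 (Fin d → ℝ)).symm.measurableEmbedding (fun y => F (WithLp.toLp 2 y)) S

theorem isCompact_ofLp_preimage_Icc (a b : Fin d → ℝ) :
    IsCompact (WithLp.ofLp ⁻¹' Icc a b : Set (EuclideanSpace ℝ (Fin d))) :=
  (PiLp.continuousLinearEquiv 2 ℝ fun _ : Fin d => ℝ).toHomeomorph.isCompact_preimage.2
    isCompact_Icc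

theorem setIntegral_mul_lap_add_inner_gradient_eq_zero {a b : Fin d → ℝ} (hab : a ≤ b)
    {g φ : EuclideanSpace ℝ (Fin d) → ℝ} {U : Set (EuclideanSpace ℝ (Fin d))} (hU : IsOpen U)
    (hbox : WithLp.ofLp ⁻¹' Icc a b ⊆ U) (hg : ContDiffOn ℝ 2 g U) (hφ : ContDiff ℝ 1 φ)
    (hφa : ∀ x i, x i = a i → φ x = 0) (hφb : ∀ x i, x i = b i → φ x = 0) :
    ∫ x in WithLp.ofLp ⁻¹' Icc a b, φ x * lap g x + ⟪gradient φ x, gradient g x⟫ = 0 := by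
  cases d with
  | zero => simp [lap, Subsingleton.elim (gradient φ _) 0]
  | succ n =>
  set G : Fin (n + 1) → EuclideanSpace ℝ (Fin (n + 1)) → ℝ :=
    fun i y => fderiv ℝ g y (EuclideanSpace.single i 1)
  have hG : ∀ i, ContDiffOn ℝ 1 (G i) U := fun i =>
    (hg.fderiv_of_isOpen hU (by norm_num)).clm_apply contDiffOn_const
  have hmaps : MapsTo (WithLp.toLp 2) (Icc a b) U := fun y hy => hbox hy
  have hcont_toLp : Continuous (WithLp.toLp 2 : (Fin (n + 1) → ℝ) → _) := PiLp.continuous_toLp 2 _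
  have hcont : ContinuousOn (fun x => φ x * lap g x + ⟪gradient φ x, gradient g x⟫) U :=
    (hφ.continuous.continuousOn.mul (hg.continuousOn_lap hU)).add
      ((hg.of_le (by norm_num)).continuousOn_inner_gradient hU hφ)
  -- the divergence theorem for the vector field `φ ∇g`, read in the coordinates `Fin (n + 1) → ℝ`
  have hdiv := integral_divergence_of_hasFDerivAt_off_countable' a b hab
    (fun i y => φ (WithLp.toLp 2 y) * G i (WithLp.toLp 2 y))
    (fun i y => (φ (WithLp.toLp 2 y) • fderiv ℝ (G i) (WithLp.toLp 2 y)
      + G i (WithLp.toLp 2 y) • fderiv ℝ φ (WithLp.toLp 2 y)).comp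
        (PiLp.continuousLinearEquiv 2 ℝ _).symm.toContinuousLinearMap) ∅ countable_empty
    (fun i => (hφ.continuous.comp hcont_toLp).continuousOn.mul
      ((hG i).continuousOn.comp hcont_toLp.continuousOn hmaps))
    (fun y hy i => by
      have hyU : WithLp.toLp 2 y ∈ U :=
        hmaps ((pi_univ_Icc a b ▸ pi_mono fun j _ => Ioo_subset_Icc_self) hy.1)
      exact ((hφ.differentiable one_ne_zero _).hasFDerivAt.mul
        (((hG i).differentiableOn one_ne_zero).differentiableAt
          (hU.mem_nhds hyU)).hasFDerivAt).comp y (PiLp.hasFDerivAt_toLp 2 y))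
    (((hcont.comp hcont_toLp.continuousOn hmaps).integrableOn_compact isCompact_Icc).congr_fun
      (fun y _ => (sum_fderiv_mul_partial_single φ g (WithLp.toLp 2 y)).symm) measurableSet_Icc)
  have hfaces : ∀ c : Fin (n + 1) → ℝ, (∀ x i, x i = c i → φ x = 0) → ∀ i (z : Fin n → ℝ),
      φ (WithLp.toLp 2 (Fin.insertNth i (c i) z)) * G i (WithLp.toLp 2 (Fin.insertNth i (c i) z))
        = 0 :=
    fun c hc i z => by rw [hc _ i (by simp), zero_mul]
  simp only [hfaces a hφa, hfaces b hφb, integral_zero, sub_zero, Finset.sum_const_zero] at hdiv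
  rw [setIntegral_ofLp_preimage]
  exact (integral_congr_ae (.of_forall fun y =>
    (sum_fderiv_mul_partial_single φ g (WithLp.toLp 2 y)).symm)).trans hdiv

theorem setIntegral_mul_lap_eq_neg_inner {a b : Fin d → ℝ} (hab : a ≤ b)
    {g φ : EuclideanSpace ℝ (Fin d) → ℝ} {U : Set (EuclideanSpace ℝ (Fin d))} (hU : IsOpen U)
    (hbox : WithLp.ofLp ⁻¹' Icc a b ⊆ U) (hg : ContDiffOn ℝ 2 g U) (hφ : ContDiff ℝ 1 φ)
    (hφa : ∀ x i, x i = a i → φ x = 0) (hφb : ∀ x i, x i = b i → φ x = 0) :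
    ∫ x in WithLp.ofLp ⁻¹' Icc a b, φ x * lap g x
      = -∫ x in WithLp.ofLp ⁻¹' Icc a b, ⟪gradient φ x, gradient g x⟫ := by
  have hcpt := isCompact_ofLp_preimage_Icc a b
  have hzero := setIntegral_mul_lap_add_inner_gradient_eq_zero hab hU hbox hg hφ hφa hφb
  rw [integral_add (f := fun x => φ x * lap g x)
    ((hφ.continuous.continuousOn.mul ((hg.continuousOn_lap hU).mono hbox)).integrableOn_compact
      hcpt)
    (((hg.of_le (by norm_num)).continuousOn_inner_gradient hU hφ).mono hbox
      |>.integrableOn_compact hcpt)] at hzero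
  linarith

theorem setIntegral_mul_le_setIntegral_abs {α : Type*} [MeasurableSpace α] {μ : Measure α}
    {s : Set α} (hs : MeasurableSet s) {φ f : α → ℝ} (hφ : ∀ x ∈ s, φ x ∈ Icc 0 1)
    (hφf : IntegrableOn (fun x => φ x * f x) s μ) (hf : IntegrableOn f s μ) :
    ∫ x in s, φ x * f x ∂μ ≤ ∫ x in s, |f x| ∂μ := by
  refine setIntegral_mono_on hφf hf.abs hs fun x hx => ?_
  calc φ x * f x ≤ φ x * |f x| := mul_le_mul_of_nonneg_left (le_abs_self _) (hφ x hx).1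
    _ ≤ |f x| := mul_le_of_le_one_left (abs_nonneg _) (hφ x hx).2

theorem setIntegral_mul_lap_le {a b : Fin d → ℝ} (hab : a ≤ b)
    {g φ : EuclideanSpace ℝ (Fin d) → ℝ} {U : Set (EuclideanSpace ℝ (Fin d))} (hU : IsOpen U)
    (hbox : WithLp.ofLp ⁻¹' Icc a b ⊆ U) (hg : ContDiffOn ℝ 2 g U) (hφ : ContDiff ℝ 1 φ)
    (hφa : ∀ x i, x i = a i → φ x = 0) (hφb : ∀ x i, x i = b i → φ x = 0) {K : ℝ}
    (hφK : ∀ x ∈ WithLp.ofLp ⁻¹' Icc a b, ‖gradient φ x‖ ≤ K) :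
    ∫ x in WithLp.ofLp ⁻¹' Icc a b, φ x * lap g x
      ≤ K * ∫ x in WithLp.ofLp ⁻¹' Icc a b, ‖gradient g x‖ := by
  have hcpt := isCompact_ofLp_preimage_Icc a b
  have hg1 : ContDiffOn ℝ 1 g U := hg.of_le (by norm_num)
  rw [setIntegral_mul_lap_eq_neg_inner hab hU hbox hg hφ hφa hφb, ← integral_neg,
    ← integral_const_mul]
  refine setIntegral_mono_on ((hg1.continuousOn_inner_gradient hU hφ).mono hbox
      |>.integrableOn_compact hcpt).neg
    (((hg1.continuousOn_gradient hU).mono hbox).norm.integrableOn_compact hcpt |>.const_mul K)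
    hcpt.isClosed.measurableSet fun x hx => ?_
  calc -⟪gradient φ x, gradient g x⟫ ≤ ‖gradient φ x‖ * ‖gradient g x‖ :=
        (neg_le_abs _).trans (abs_real_inner_le_norm _ _)
    _ ≤ K * ‖gradient g x‖ := mul_le_mul_of_nonneg_right (hφK x hx) (norm_nonneg _)

theorem mul_setIntegral_le_of_le_lap {a b : Fin d → ℝ} (hab : a ≤ b)
    {g u φ : EuclideanSpace ℝ (Fin d) → ℝ} {U : Set (EuclideanSpace ℝ (Fin d))} (hU : IsOpen U)
    (hbox : WithLp.ofLp ⁻¹' Icc a b ⊆ U) (hg : ContDiffOn ℝ 2 g U)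
    (hu : IntegrableOn u (WithLp.ofLp ⁻¹' Icc a b)) (hφ : ContDiff ℝ 1 φ)
    (hφa : ∀ x i, x i = a i → φ x = 0) (hφb : ∀ x i, x i = b i → φ x = 0)
    (hφ01 : ∀ x ∈ WithLp.ofLp ⁻¹' Icc a b, φ x ∈ Icc 0 1) {K : ℝ}
    (hφK : ∀ x ∈ WithLp.ofLp ⁻¹' Icc a b, ‖gradient φ x‖ ≤ K) {α β c : ℝ} (hα : 0 ≤ α)
    (hβ : 0 ≤ β)
    (hineq : ∀ᵐ x ∂volume.restrict (WithLp.ofLp ⁻¹' Icc a b), c ≤ α * g x + lap g x + β * u x) :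
    c * ∫ x in WithLp.ofLp ⁻¹' Icc a b, φ x
      ≤ α * (∫ x in WithLp.ofLp ⁻¹' Icc a b, |g x|)
        + K * (∫ x in WithLp.ofLp ⁻¹' Icc a b, ‖gradient g x‖)
        + β * ∫ x in WithLp.ofLp ⁻¹' Icc a b, |u x| := by
  set B : Set (EuclideanSpace ℝ (Fin d)) := WithLp.ofLp ⁻¹' Icc a b
  have hcpt : IsCompact B := isCompact_ofLp_preimage_Icc a b
  have hB : MeasurableSet B := hcpt.isClosed.measurableSet
  have hφc := hφ.continuous.continuousOn (s := B)
  have hgc : ContinuousOn g B := hg.continuousOn.mono hbox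
  have int_φg : IntegrableOn (fun x => φ x * g x) B := (hφc.mul hgc).integrableOn_compact hcpt
  have int_φlap : IntegrableOn (fun x => φ x * lap g x) B :=
    (hφc.mul ((hg.continuousOn_lap hU).mono hbox)).integrableOn_compact hcpt
  have int_φu : IntegrableOn (fun x => φ x * u x) B :=
    hu.bdd_mul (c := 1) hφ.continuous.aestronglyMeasurable <| (ae_restrict_iff' hB).2 <|
      .of_forall fun x hx => by
        rw [norm_eq_abs, abs_le]; exact ⟨by linarith [(hφ01 x hx).1], (hφ01 x hx).2⟩
  have htest : ∫ x in B, φ x * c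
      ≤ ∫ x in B, α * (φ x * g x) + φ x * lap g x + β * (φ x * u x) := by
    refine integral_mono_ae ((hφc.mul continuousOn_const).integrableOn_compact hcpt)
      (((int_φg.const_mul α).add int_φlap).add (int_φu.const_mul β)) ?_
    filter_upwards [hineq, ae_restrict_mem hB] with x hx hxB
    linarith [mul_le_mul_of_nonneg_left hx (hφ01 x hxB).1]
  rw [integral_add (f := fun x => α * (φ x * g x) + φ x * lap g x)
      ((int_φg.const_mul α).add int_φlap) (int_φu.const_mul β),
    integral_add (int_φg.const_mul α) int_φlap, integral_const_mul, integral_const_mul,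
    integral_mul_const] at htest
  have hgreen := setIntegral_mul_lap_le hab hU hbox hg hφ hφa hφb hφK
  have hg_abs := setIntegral_mul_le_setIntegral_abs hB hφ01 int_φg (hgc.integrableOn_compact hcpt)
  have hu_abs := setIntegral_mul_le_setIntegral_abs hB hφ01 int_φu hu
  linarith [mul_le_mul_of_nonneg_left hg_abs hα, mul_le_mul_of_nonneg_left hu_abs hβ]

def bump (m t : ℝ) : ℝ := 1 - (2 * m * t - 1) ^ 2

theorem hasDerivAt_bump (m t : ℝ) : HasDerivAt (bump m) (-(4 * m * (2 * m * t - 1))) t :=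
  (((((hasDerivAt_id t).const_mul (2 * m)).sub_const 1).pow 2).const_sub 1).congr_deriv
    (by simp; ring)

theorem sq_deriv_bump (m t : ℝ) :
    (-(4 * m * (2 * m * t - 1))) ^ 2 = 16 * m ^ 2 * (1 - bump m t) := by
  simp only [bump]
  ring

theorem bump_mem_Icc {m t : ℝ} (hm : 0 < m) (ht : t ∈ Icc 0 (1 / m)) : bump m t ∈ Icc 0 1 := by
  have h1 : m * t ≤ 1 := by
    have := mul_le_mul_of_nonneg_left ht.2 hm.le
    rwa [mul_one_div_cancel hm.ne'] at this
  have h0 : 0 ≤ m * t := mul_nonneg hm.le ht.1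
  simp only [bump, mem_Icc]
  constructor <;> nlinarith

theorem bump_zero (m : ℝ) : bump m 0 = 0 := by simp [bump]

theorem bump_one_div {m : ℝ} (hm : m ≠ 0) : bump m (1 / m) = 0 := by
  simp [bump, hm]
  norm_num

theorem integral_bump {m : ℝ} (hm : 0 < m) : ∫ t in Icc 0 (1 / m), bump m t = 2 / (3 * m) := by
  rw [integral_Icc_eq_integral_Ioc, ← intervalIntegral.integral_of_le (by positivity)]
  have hpoly : ∀ t, bump m t = 4 * m * t - 4 * m ^ 2 * t ^ 2 := fun t => by simp only [bump]; ring
  simp only [hpoly]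
  rw [intervalIntegral.integral_sub, intervalIntegral.integral_const_mul,
    intervalIntegral.integral_const_mul]
  · simp
    field_simp
    ring
  all_goals exact Continuous.intervalIntegrable (by fun_prop) _ _

def cubeBump (m : ℝ) (x : EuclideanSpace ℝ (Fin d)) : ℝ := ∏ i, bump m (x i)

theorem contDiff_cubeBump (m : ℝ) : ContDiff ℝ 1 (cubeBump (d := d) m) := by
  unfold cubeBump bump
  fun_prop

theorem hasFDerivAt_cubeBump (m : ℝ) (x : EuclideanSpace ℝ (Fin d)) :
    HasFDerivAt (cubeBump m) (∑ i, (∏ j ∈ Finset.univ.erase i, bump m (x j)) •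
      (-(4 * m * (2 * m * x i - 1))) • EuclideanSpace.proj (𝕜 := ℝ) i) x := by
  have hcoord : ∀ i, HasFDerivAt (fun y : EuclideanSpace ℝ (Fin d) => bump m (y i))
      ((-(4 * m * (2 * m * x i - 1))) • EuclideanSpace.proj (𝕜 := ℝ) i) x := fun i =>
    (hasDerivAt_bump m (x i)).comp_hasFDerivAt (h₂ := bump m) x (PiLp.hasFDerivAt_apply 2 x i)
  exact HasFDerivAt.finsetProd fun i _ => hcoord i

theorem fderiv_cubeBump_single (m : ℝ) (x : EuclideanSpace ℝ (Fin d)) (i : Fin d) :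
    fderiv ℝ (cubeBump m) x (EuclideanSpace.single i 1)
      = -(4 * m * (2 * m * x i - 1)) * ∏ j ∈ Finset.univ.erase i, bump m (x j) := by
  rw [(hasFDerivAt_cubeBump m x).fderiv]
  simp [mul_comm]

theorem cubeBump_mem_Icc {m : ℝ} (hm : 0 < m) {x : EuclideanSpace ℝ (Fin d)}
    (hx : ∀ i, x i ∈ Icc 0 (1 / m)) : cubeBump m x ∈ Icc 0 1 :=
  ⟨Finset.prod_nonneg fun i _ => (bump_mem_Icc hm (hx i)).1,
    Finset.prod_le_one (fun i _ => (bump_mem_Icc hm (hx i)).1)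
      fun i _ => (bump_mem_Icc hm (hx i)).2⟩

theorem cubeBump_eq_zero {m t : ℝ} {x : EuclideanSpace ℝ (Fin d)} {i : Fin d}
    (ht : bump m t = 0) (hx : x i = t) : cubeBump m x = 0 :=
  Finset.prod_eq_zero (Finset.mem_univ i) (hx ▸ ht)

theorem norm_gradient_cubeBump_le {m : ℝ} (hm : 0 < m) {x : EuclideanSpace ℝ (Fin d)}
    (hx : ∀ i, x i ∈ Icc 0 (1 / m)) : ‖gradient (cubeBump m) x‖ ≤ 4 * m := by
  rw [norm_gradient_eq, Real.sqrt_le_left (by positivity)]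
  simp only [fderiv_cubeBump_single]
  refine (Finset.univ.sum_sq_mul_prod_erase_le (by positivity)
    (fun i => (bump_mem_Icc hm (hx i)).1) (fun i => (bump_mem_Icc hm (hx i)).2)
    fun i => (sq_deriv_bump m (x i)).le).trans_eq (by ring)

theorem setIntegral_cubeBump {m : ℝ} (hm : 0 < m) :
    ∫ x in WithLp.ofLp ⁻¹' Icc 0 (fun _ : Fin d => 1 / m), cubeBump m x = (2 / (3 * m)) ^ d := by
  rw [setIntegral_ofLp_preimage, ← pi_univ_Icc, volume_pi, Measure.restrict_pi_pi]
  simp only [cubeBump]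
  rw [integral_fintype_prod_eq_prod (fun _ => bump m)]
  simp only [Pi.zero_apply, integral_bump hm, Finset.prod_const, Finset.card_univ,
    Fintype.card_fin]

theorem mul_one_div_two_mul_pow_le_of_le_lap {m : ℝ} (hm : 0 < m)
    {g u : EuclideanSpace ℝ (Fin d) → ℝ} {U : Set (EuclideanSpace ℝ (Fin d))} (hU : IsOpen U)
    (hDU : WithLp.ofLp ⁻¹' Icc 0 (fun _ => 1 / m) ⊆ U) (hg : ContDiffOn ℝ 2 g U)
    (hu : IntegrableOn u (WithLp.ofLp ⁻¹' Icc 0 (fun _ => 1 / m))) {α β c : ℝ} (hα : 0 ≤ α)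
    (hβ : 0 ≤ β) (hc : 0 ≤ c)
    (hineq : ∀ᵐ x ∂volume.restrict (WithLp.ofLp ⁻¹' Icc 0 (fun _ => 1 / m)),
      c ≤ α * g x + lap g x + β * u x) :
    c * (1 / (2 * m)) ^ d
      ≤ α * (∫ x in WithLp.ofLp ⁻¹' Icc 0 (fun _ => 1 / m), |g x|)
        + 4 * m * (∫ x in WithLp.ofLp ⁻¹' Icc 0 (fun _ => 1 / m), ‖gradient g x‖)
        + β * ∫ x in WithLp.ofLp ⁻¹' Icc 0 (fun _ => 1 / m), |u x| := by
  have hbump := mul_setIntegral_le_of_le_lap (fun _ => by positivity) hU hDU hg hu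
    (contDiff_cubeBump m) (fun x i hx => cubeBump_eq_zero (bump_zero m) hx)
    (fun x i hx => cubeBump_eq_zero (bump_one_div hm.ne') hx)
    (fun x hx => cubeBump_mem_Icc hm fun i => ⟨hx.1 i, hx.2 i⟩)
    (fun x hx => norm_gradient_cubeBump_le hm fun i => ⟨hx.1 i, hx.2 i⟩) hα hβ hineq
  rw [setIntegral_cubeBump hm] at hbump
  refine le_trans (mul_le_mul_of_nonneg_left (pow_le_pow_left₀ (by positivity) ?_ d) hc) hbump
  rw [div_le_div_iff₀ (by positivity) (by positivity)]
  linarith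

end

theorem stmt0_general (d : ℕ) (m : ℝ) (hm : 0 < m)
    (D : Set (EuclideanSpace ℝ (Fin d)))
    (hD : D = {x : EuclideanSpace ℝ (Fin d) | ∀ i, x i ∈ Set.Icc (0 : ℝ) (1 / m)})
    (g u : EuclideanSpace ℝ (Fin d) → ℝ)
    (U : Set (EuclideanSpace ℝ (Fin d))) (hU : IsOpen U) (hDU : D ⊆ U)
    (hg : ContDiffOn ℝ 2 g U)
    (hu : IntegrableOn u D)
    (α C₀ : ℝ) (hα : 0 < α) (hC₀ : 0 < C₀)
    (hineq : ∀ᵐ x ∂(volume.restrict D), C₀ / m ≤ α * g x + lap g x + (1 / m) * u x) :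
    C₀ / 2 ^ (d + 2) * (1 / m) ^ (d + 2) - (1 / (2 * m ^ 2)) * ∫ x in D, |u x|
      ≤ (α / (2 * m)) * (∫ x in D, |g x|) + ∫ x in D, ‖gradient g x‖ := by
  have hDbox : D = WithLp.ofLp ⁻¹' Icc 0 (fun _ => 1 / m) := by
    rw [hD]
    ext x
    simp [Pi.le_def, forall_and]
  rw [hDbox] at hDU hu hineq
  have hcube := mul_one_div_two_mul_pow_le_of_le_lap hm hU hDU hg hu hα.le (by positivity)
    (by positivity) hineq
  rw [← hDbox] at hcube
  have hIg : 0 ≤ ∫ x in D, |g x| := integral_nonneg fun _ => abs_nonneg _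
  have hIu : 0 ≤ ∫ x in D, |u x| := integral_nonneg fun _ => abs_nonneg _
  have hm0 : m ≠ 0 := hm.ne'
  calc C₀ / 2 ^ (d + 2) * (1 / m) ^ (d + 2) - 1 / (2 * m ^ 2) * ∫ x in D, |u x|
      = 1 / (4 * m) * (C₀ / m * (1 / (2 * m)) ^ d) - 1 / (2 * m ^ 2) * ∫ x in D, |u x| := by
        simp only [inv_pow, mul_pow, mul_inv, pow_add, div_eq_mul_inv]
        ring
    _ ≤ 1 / (4 * m) * (α * (∫ x in D, |g x|) + 4 * m * (∫ x in D, ‖gradient g x‖)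
          + 1 / m * ∫ x in D, |u x|) - 1 / (4 * m ^ 2) * ∫ x in D, |u x| := by
        gcongr
        linarith
    _ = α / (4 * m) * (∫ x in D, |g x|) + ∫ x in D, ‖gradient g x‖ := by
        field_simp
        ring
    _ ≤ α / (2 * m) * (∫ x in D, |g x|) + ∫ x in D, ‖gradient g x‖ := by
        gcongr
        linarith

/-- If `α g + Δ g + (1/m) u ≥ C₀/m` a.e. on the cube `D = [0, 1/m]^d`,
with `g` twice continuously differentiable on an open neighborhood of `D` and `u ∈ L¹(D)`, then
`(α/(2m)) ∫_D |g| + ∫_D |∇g| ≥ (C₀/2^{d+2}) m^{-(d+2)} - (1/(2m²)) ∫_D |u|`. -/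
theorem stmt0 (d : ℕ) (hd : 1 ≤ d) (m : ℝ) (hm : 0 < m)
    (D : Set (EuclideanSpace ℝ (Fin d)))
    (hD : D = {x : EuclideanSpace ℝ (Fin d) | ∀ i, x i ∈ Set.Icc (0 : ℝ) (1 / m)})
    (g u : EuclideanSpace ℝ (Fin d) → ℝ)
    (U : Set (EuclideanSpace ℝ (Fin d))) (hU : IsOpen U) (hDU : D ⊆ U)
    (hg : ContDiffOn ℝ 2 g U)
    (hu : IntegrableOn u D)
    (α C₀ : ℝ) (hα : 0 < α) (hC₀ : 0 < C₀)
    (hineq : ∀ᵐ x ∂(volume.restrict D), C₀ / m ≤ α * g x + lap g x + (1 / m) * u x) :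
    C₀ / 2 ^ (d + 2) * (1 / m) ^ (d + 2) - (1 / (2 * m ^ 2)) * ∫ x in D, |u x|
      ≤ (α / (2 * m)) * (∫ x in D, |g x|) + ∫ x in D, ‖gradient g x‖ :=
  stmt0_general d m hm D hD g u U hU hDU hg hu α C₀ hα hC₀ hineq
end

section
/- There exist constants c, c' ∈ (0,1) depending only on the dimension d such that for every unit vector e ∈ ℝ^d there exist closed axis-parallel subcubes N⁺ and N⁻ of [−1/2, 1/2]^d, each of side length at least c, such that ∇φ(x)·e ≥ c' for all x ∈ N⁺ and ∇φ(x)·e ≤ −c' for all x ∈ N⁻. -/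
/-!
Near `u₊` (and away from `u₋`) the template is the radial bump `g(‖x - u₊‖²)` with
`g(s) = exp(1/(64 s - 1))`, so `∇φ(x) = 2 g'(‖x - u₊‖²) • (x - u₊)`, and `g' ≤ -8` on `[0, 1/128]`.
The cube of side `1/(128√d)` with corner `u₊ - e/16` lies in the ball of radius `1/128` around
that corner, hence `‖x - u₊‖ ≤ 9/128` and `⟪x - u₊, e⟫ ≤ -7/128` on it, which gives
`⟪∇φ(x), e⟫ ≥ 16 · 7/128 = 7/8`. The cube for `-e` serves as `N⁻`.
-/

open MeasureTheory Real

/-- The scalar mollifier `ϕ(t) = exp(1/(64 t² − 1))` for `t < 1/8`, and `0` otherwise. -/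
noncomputable def phiScalar (t : ℝ) : ℝ :=
  if t < 1 / 8 then Real.exp (1 / (64 * t ^ 2 - 1)) else 0

/-- The point `u₊ = (1/4, …, 1/4) ∈ ℝ^d`. -/
noncomputable def uPlus (d : ℕ) : EuclideanSpace ℝ (Fin d) :=
  (EuclideanSpace.equiv (Fin d) ℝ).symm (fun _ => 1 / 4)

/-- The template function `φ(x) = ϕ(|x − u₊|) − ϕ(|x − u₋|)`, where `u₋ = −u₊`. -/
noncomputable def phiTemplate (d : ℕ) (x : EuclideanSpace ℝ (Fin d)) : ℝ :=
  phiScalar ‖x - uPlus d‖ - phiScalar ‖x - (-uPlus d)‖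

/-- The closed axis-parallel cube with lower corner `a` and side length `s`. -/
def closedCube {d : ℕ} (a : EuclideanSpace ℝ (Fin d)) (s : ℝ) : Set (EuclideanSpace ℝ (Fin d)) :=
  {x | ∀ i, x i ∈ Set.Icc (a i) (a i + s)}

open Filter Topology

lemma EuclideanSpace.norm_le_sqrt_card_mul {ι : Type*} [Fintype ι] {x : EuclideanSpace ℝ ι}
    {c : ℝ} (hc : 0 ≤ c) (h : ∀ i, |x i| ≤ c) : ‖x‖ ≤ √(Fintype.card ι) * c :=
  ((EuclideanSpace.basisFun ι ℝ).norm_le_card_mul_iSup_norm_inner x).trans <| by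
    gcongr
    exact Real.iSup_le (fun i => by simpa using h i) hc

theorem HasDerivAt.hasGradientAt_comp_norm_sub_sq {E : Type*} [NormedAddCommGroup E]
    [InnerProductSpace ℝ E] [CompleteSpace E] {g : ℝ → ℝ} {g' : ℝ} {u x : E}
    (hg : HasDerivAt g g' (‖x - u‖ ^ 2)) :
    HasGradientAt (fun y => g (‖y - u‖ ^ 2)) ((2 * g') • (x - u)) x := by
  rw [hasGradientAt_iff_hasFDerivAt]
  refine (hg.comp_hasFDerivAt x ((hasFDerivAt_id x).sub_const u).norm_sq).congr_fderiv ?_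
  ext y
  simp only [FunLike.coe_smul, Pi.smul_apply, ContinuousLinearMap.comp_apply, coe_innerSL_apply,
    id_eq, ContinuousLinearMap.id_apply, InnerProductSpace.toDual_apply_apply, real_inner_smul_left]
  ring

noncomputable def bumpProfile (s : ℝ) : ℝ := exp (1 / (64 * s - 1))

noncomputable def bumpProfileDeriv (s : ℝ) : ℝ :=
  -(64 * exp (1 / (64 * s - 1)) / (64 * s - 1) ^ 2)

lemma hasDerivAt_bumpProfile {s : ℝ} (hs : 64 * s - 1 ≠ 0) :
    HasDerivAt bumpProfile (bumpProfileDeriv s) s := by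
  have := ((((hasDerivAt_id s).const_mul 64).sub_const 1).inv hs).exp
  convert this using 1
  · ext t; simp [bumpProfile]
  · simp only [bumpProfileDeriv, one_div, id_eq, Pi.inv_apply, mul_one]; ring

lemma bumpProfileDeriv_le {s : ℝ} (hs₀ : 0 ≤ s) (hs : s ≤ 1 / 128) : bumpProfileDeriv s ≤ -8 := by
  set q := 64 * s - 1
  have hq₀ : q < 0 := by linarith
  have hq_sq : q ^ 2 ≤ 1 := by nlinarith
  have hexp : 1 / 8 ≤ exp (1 / q) := by
    have hinv : -2 ≤ 1 / q := by rw [le_div_iff_of_neg hq₀]; linarith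
    have he : exp 1 * exp 1 < 8 := by nlinarith [exp_one_lt_d9, exp_pos 1]
    calc (1 : ℝ) / 8 ≤ exp (-2) := by
          rw [show (-2 : ℝ) = -(1 + 1) by norm_num, exp_neg, exp_add, one_div]
          exact inv_anti₀ (by positivity) he.le
      _ ≤ exp (1 / q) := exp_le_exp.2 hinv
  rw [bumpProfileDeriv, neg_le_neg_iff, le_div_iff₀ (by nlinarith)]
  nlinarith

lemma phiScalar_norm_eq_bumpProfile {E : Type*} [NormedAddCommGroup E] {y : E}
    (hy : ‖y‖ < 1 / 8) : phiScalar ‖y‖ = bumpProfile (‖y‖ ^ 2) := by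
  rw [phiScalar, if_pos hy, bumpProfile]

lemma phiScalar_of_le {t : ℝ} (ht : 1 / 8 ≤ t) : phiScalar t = 0 := by
  rw [phiScalar, if_neg ht.not_gt]

lemma phiTemplate_eventuallyEq {d : ℕ} {x : EuclideanSpace ℝ (Fin d)}
    (h_near : ‖x - uPlus d‖ < 1 / 8) (h_far : 1 / 8 < ‖x + uPlus d‖) :
    phiTemplate d =ᶠ[𝓝 x] fun y => bumpProfile (‖y - uPlus d‖ ^ 2) := by
  have hopen : IsOpen ({y : EuclideanSpace ℝ (Fin d) | ‖y - uPlus d‖ < 1 / 8} ∩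
      {y | 1 / 8 < ‖y + uPlus d‖}) :=
    (isOpen_lt (by fun_prop) continuous_const).inter (isOpen_lt continuous_const (by fun_prop))
  filter_upwards [hopen.mem_nhds ⟨h_near, h_far⟩] with y ⟨hy_near, hy_far⟩
  rw [phiTemplate, sub_neg_eq_add, phiScalar_norm_eq_bumpProfile hy_near,
    phiScalar_of_le hy_far.le, sub_zero]

lemma hasGradientAt_phiTemplate {d : ℕ} {x : EuclideanSpace ℝ (Fin d)}
    (h_near : ‖x - uPlus d‖ < 1 / 8) (h_far : 1 / 8 < ‖x + uPlus d‖) :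
    HasGradientAt (phiTemplate d)
      ((2 * bumpProfileDeriv (‖x - uPlus d‖ ^ 2)) • (x - uPlus d)) x := by
  have hs : 64 * ‖x - uPlus d‖ ^ 2 - 1 ≠ 0 := by nlinarith [norm_nonneg (x - uPlus d)]
  exact ((hasDerivAt_bumpProfile hs).hasGradientAt_comp_norm_sub_sq).congr_of_eventuallyEq
    (phiTemplate_eventuallyEq h_near h_far)

@[simp]
lemma uPlus_apply (d : ℕ) (i : Fin d) : uPlus d i = 1 / 4 := rfl

lemma quarter_le_norm_uPlus {d : ℕ} (hd : 1 ≤ d) : 1 / 4 ≤ ‖uPlus d‖ := by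
  simpa using PiLp.norm_apply_le (uPlus d) ⟨0, hd⟩

lemma inner_gradient_phiTemplate_ge {d : ℕ} (hd : 1 ≤ d) {x e : EuclideanSpace ℝ (Fin d)}
    (hx : ‖x - uPlus d‖ ≤ 9 / 128) (hxe : inner ℝ (x - uPlus d) e ≤ -(7 / 128)) :
    7 / 8 ≤ inner ℝ (gradient (phiTemplate d) x) e := by
  have h_far : 1 / 8 < ‖x + uPlus d‖ := by
    have := norm_sub_norm_le ((2 : ℝ) • uPlus d) (uPlus d - x)
    rw [norm_smul, Real.norm_two, norm_sub_rev,
      show (2 : ℝ) • uPlus d - (uPlus d - x) = x + uPlus d by module] at this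
    linarith [quarter_le_norm_uPlus hd]
  have hD : bumpProfileDeriv (‖x - uPlus d‖ ^ 2) ≤ -8 :=
    bumpProfileDeriv_le (by positivity) (by nlinarith [norm_nonneg (x - uPlus d)])
  rw [(hasGradientAt_phiTemplate (by linarith) h_far).gradient, real_inner_smul_left]
  nlinarith

lemma closedCube_subset_closedBall {d : ℕ} (a : EuclideanSpace ℝ (Fin d)) {s : ℝ} (hs : 0 ≤ s) :
    closedCube a s ⊆ Metric.closedBall a (√d * s) := by
  intro x hx
  rw [Metric.mem_closedBall, dist_eq_norm]
  simpa using EuclideanSpace.norm_le_sqrt_card_mul (x := x - a) hs fun i => by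
    obtain ⟨hl, hr⟩ := hx i
    rw [PiLp.sub_apply, abs_le]
    constructor <;> linarith

lemma exists_closedCube_le_inner_gradient_phiTemplate {d : ℕ} (hd : 1 ≤ d)
    {e : EuclideanSpace ℝ (Fin d)} (he : ‖e‖ = 1) :
    ∃ (a : EuclideanSpace ℝ (Fin d)) (s : ℝ), (128 * √d)⁻¹ ≤ s ∧
      closedCube a s ⊆
        {x : EuclideanSpace ℝ (Fin d) | ∀ i, x i ∈ Set.Icc (-(1 / 2) : ℝ) (1 / 2)} ∧
      ∀ x ∈ closedCube a s, 7 / 8 ≤ inner ℝ (gradient (phiTemplate d) x) e := by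
  have hsd : 1 ≤ √(d : ℝ) := Real.one_le_sqrt.2 (by exact_mod_cast hd)
  set s : ℝ := (128 * √d)⁻¹
  have hs : 0 ≤ s := by positivity
  have hs_le : s ≤ 1 / 128 := by
    rw [one_div]; exact inv_anti₀ (by norm_num) (by linarith)
  have hsd_s : √d * s = 1 / 128 := by simp only [s]; field_simp
  set a := uPlus d - (1 / 16 : ℝ) • e
  refine ⟨a, s, le_rfl, fun x hx i => ?_, fun x hx => ?_⟩
  · obtain ⟨hei_lo, hei_hi⟩ := abs_le.1 (he ▸ PiLp.norm_apply_le e i : |e i| ≤ 1)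
    obtain ⟨hl, hr⟩ := hx i
    simp only [a, PiLp.sub_apply, PiLp.smul_apply, uPlus_apply, smul_eq_mul] at hl hr
    constructor <;> linarith
  · have hxa : ‖x - a‖ ≤ 1 / 128 := by
      simpa [dist_eq_norm, hsd_s] using closedCube_subset_closedBall a hs hx
    have hxu : x - uPlus d = (x - a) - (1 / 16 : ℝ) • e := by module
    apply inner_gradient_phiTemplate_ge hd
    · calc ‖x - uPlus d‖ ≤ ‖x - a‖ + ‖(1 / 16 : ℝ) • e‖ := hxu ▸ norm_sub_le _ _
        _ ≤ 9 / 128 := by rw [norm_smul, he, mul_one, Real.norm_of_nonneg (by norm_num)]; linarith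
    · have hxa_e : inner ℝ (x - a) e ≤ 1 / 128 :=
        calc inner ℝ (x - a) e ≤ ‖x - a‖ * ‖e‖ := real_inner_le_norm _ _
          _ ≤ 1 / 128 := by rw [he, mul_one]; exact hxa
      rw [hxu, inner_sub_left, real_inner_smul_left, real_inner_self_eq_norm_sq, he]
      linarith

/-- There exist constants `c, c' ∈ (0,1)`, depending only on `d`, such that for
every unit vector `e` there are closed axis-parallel subcubes `N⁺, N⁻` of `[−1/2, 1/2]^d` of side
length at least `c` with `∇φ · e ≥ c'` on `N⁺` and `∇φ · e ≤ −c'` on `N⁻`. -/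
theorem stmt3 (d : ℕ) (hd : 1 ≤ d) :
    ∃ c c' : ℝ, 0 < c ∧ c < 1 ∧ 0 < c' ∧ c' < 1 ∧
      ∀ e : EuclideanSpace ℝ (Fin d), ‖e‖ = 1 →
        (∃ (a : EuclideanSpace ℝ (Fin d)) (s : ℝ), c ≤ s ∧
          closedCube a s ⊆
            {x : EuclideanSpace ℝ (Fin d) | ∀ i, x i ∈ Set.Icc (-(1 / 2) : ℝ) (1 / 2)} ∧
          ∀ x ∈ closedCube a s, c' ≤ (inner ℝ (gradient (phiTemplate d) x) e : ℝ)) ∧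
        (∃ (a : EuclideanSpace ℝ (Fin d)) (s : ℝ), c ≤ s ∧
          closedCube a s ⊆
            {x : EuclideanSpace ℝ (Fin d) | ∀ i, x i ∈ Set.Icc (-(1 / 2) : ℝ) (1 / 2)} ∧
          ∀ x ∈ closedCube a s, (inner ℝ (gradient (phiTemplate d) x) e : ℝ) ≤ -c') := by
  have hsd : 1 ≤ √(d : ℝ) := Real.one_le_sqrt.2 (by exact_mod_cast hd)
  refine ⟨(128 * √d)⁻¹, 7 / 8, by positivity, inv_lt_one_of_one_lt₀ (by linarith), by norm_num,
    by norm_num, fun e he => ⟨exists_closedCube_le_inner_gradient_phiTemplate hd he, ?_⟩⟩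
  obtain ⟨a, s, hs, hsub, hgrad⟩ :=
    exists_closedCube_le_inner_gradient_phiTemplate hd (e := -e) (by rw [norm_neg, he])
  refine ⟨a, s, hs, hsub, fun x hx => ?_⟩
  linarith [inner_neg_right (𝕜 := ℝ) (gradient (phiTemplate d) x) e ▸ hgrad x hx]
end

section
/- Let (Ω, μ) be a measure space and let f, g: Ω → [0, ∞) be measurable functions with ∫ f dμ = ∫ g dμ = 1 and g(x) > 0 for μ-almost every x. Suppose ∫ (f − g)²/g dμ < ∞. Then the integral ∫ f·log(f/g) dμ is well defined in [−∞, ∞) (its positive part is integrable) and satisfies ∫ f·log(f/g) dμ ≤ ∫ (f − g)²/g dμ, with the convention that f(x)·log(f(x)/g(x)) = 0 whenever f(x) = 0. -/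
open MeasureTheory Real

/-!
From `log t ≤ t - 1` one gets pointwise `f log (f/g) ≤ f (f/g - 1) = (f - g) + (f - g)²/g`.
The right-hand side is integrable, and its integral is `∫ (f - g)²/g` because `∫ f = ∫ g`.
Comparing positive and negative parts of the two sides gives the claim.
-/

theorem Real.mul_log_div_le_sub_add_sq_div {a b : ℝ} (ha : 0 ≤ a) (hb : 0 < b) :
    a * log (a / b) ≤ (a - b) + (a - b) ^ 2 / b := by
  have h_rhs : (a - b) + (a - b) ^ 2 / b = a * (a / b - 1) := by
    field_simp
    ring
  rw [h_rhs]
  rcases ha.eq_or_lt with rfl | ha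
  · simp
  · exact mul_le_mul_of_nonneg_left (log_le_sub_one_of_pos (div_pos ha hb)) ha.le

namespace MeasureTheory

variable {α : Type*} [MeasurableSpace α] {μ : Measure α}

theorem Integrable.lintegral_ofReal_le_ofReal_integral_add {φ : α → ℝ} (hφ : Integrable φ μ) :
    ∫⁻ x, ENNReal.ofReal (φ x) ∂μ ≤
      ENNReal.ofReal (∫ x, φ x ∂μ) + ∫⁻ x, ENNReal.ofReal (-φ x) ∂μ :=
  calc ∫⁻ x, ENNReal.ofReal (φ x) ∂μ
      = ENNReal.ofReal ((∫ x, φ x ∂μ) + (∫⁻ x, ENNReal.ofReal (-φ x) ∂μ).toReal) := by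
        rw [integral_eq_lintegral_pos_part_sub_lintegral_neg_part hφ, sub_add_cancel,
          ENNReal.ofReal_toReal hφ.lintegral_lt_top.ne]
    _ ≤ ENNReal.ofReal (∫ x, φ x ∂μ) +
          ENNReal.ofReal ((∫⁻ x, ENNReal.ofReal (-φ x) ∂μ).toReal) := ENNReal.ofReal_add_le
    _ = ENNReal.ofReal (∫ x, φ x ∂μ) + ∫⁻ x, ENNReal.ofReal (-φ x) ∂μ := by
        rw [ENNReal.ofReal_toReal hφ.fun_neg.lintegral_lt_top.ne]

theorem lintegral_ofReal_le_ofReal_integral_add_of_ae_le {u φ : α → ℝ} (hφ : Integrable φ μ)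
    (huφ : u ≤ᵐ[μ] φ) :
    ∫⁻ x, ENNReal.ofReal (u x) ∂μ < ⊤ ∧
      ∫⁻ x, ENNReal.ofReal (u x) ∂μ ≤
        ENNReal.ofReal (∫ x, φ x ∂μ) + ∫⁻ x, ENNReal.ofReal (-u x) ∂μ := by
  have h_pos : ∫⁻ x, ENNReal.ofReal (u x) ∂μ ≤ ∫⁻ x, ENNReal.ofReal (φ x) ∂μ :=
    lintegral_mono_ae (huφ.mono fun _ hx => ENNReal.ofReal_le_ofReal hx)
  have h_neg : ∫⁻ x, ENNReal.ofReal (-φ x) ∂μ ≤ ∫⁻ x, ENNReal.ofReal (-u x) ∂μ :=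
    lintegral_mono_ae (huφ.mono fun _ hx => ENNReal.ofReal_le_ofReal (neg_le_neg hx))
  refine ⟨h_pos.trans_lt hφ.lintegral_lt_top, ?_⟩
  calc ∫⁻ x, ENNReal.ofReal (u x) ∂μ
      ≤ ENNReal.ofReal (∫ x, φ x ∂μ) + ∫⁻ x, ENNReal.ofReal (-φ x) ∂μ :=
        h_pos.trans hφ.lintegral_ofReal_le_ofReal_integral_add
    _ ≤ ENNReal.ofReal (∫ x, φ x ∂μ) + ∫⁻ x, ENNReal.ofReal (-u x) ∂μ := by gcongr

end MeasureTheory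

theorem stmt6_general {Ω : Type*} [MeasurableSpace Ω] (μ : Measure Ω)
    (f g : Ω → ℝ)
    (hf0 : ∀ x, 0 ≤ f x)
    (hfint : ∫ x, f x ∂μ = 1) (hgint : ∫ x, g x ∂μ = 1)
    (hgpos : ∀ᵐ x ∂μ, 0 < g x)
    (hchi : Integrable (fun x => (f x - g x) ^ 2 / g x) μ) :
    (∫⁻ x, ENNReal.ofReal (f x * Real.log (f x / g x)) ∂μ) < ⊤ ∧
    (∫⁻ x, ENNReal.ofReal (f x * Real.log (f x / g x)) ∂μ) ≤
      ENNReal.ofReal (∫ x, (f x - g x) ^ 2 / g x ∂μ) +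
        ∫⁻ x, ENNReal.ofReal (-(f x * Real.log (f x / g x))) ∂μ := by
  have hfi := integrable_of_integral_eq_one hfint
  have hgi := integrable_of_integral_eq_one hgint
  have hdiff : Integrable (fun x => f x - g x) μ := hfi.sub hgi
  have h_bound : ∀ᵐ x ∂μ, f x * log (f x / g x) ≤ (f x - g x) + (f x - g x) ^ 2 / g x :=
    hgpos.mono fun x hx => mul_log_div_le_sub_add_sq_div (hf0 x) hx
  have h_integral : ∫ x, (f x - g x) + (f x - g x) ^ 2 / g x ∂μ =
      ∫ x, (f x - g x) ^ 2 / g x ∂μ := by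
    rw [integral_add hdiff hchi, integral_sub hfi hgi, hfint, hgint, sub_self, zero_add]
  rw [← h_integral]
  exact lintegral_ofReal_le_ofReal_integral_add_of_ae_le (hdiff.add hchi) h_bound

/-- For probability densities `f, g` with `g > 0` a.e. and finite χ²-type
divergence `∫ (f−g)²/g dμ`, the KL integrand `f·log(f/g)` (with the convention that it vanishes
where `f = 0`, which is automatic since `0 * log(0/g) = 0`) has integrable positive part, and
the extended-real integral `∫ f·log(f/g) dμ` is at most `∫ (f−g)²/g dμ`; the latter inequality is
expressed as `∫⁻ (f·log(f/g))₊ ≤ ∫ (f−g)²/g dμ + ∫⁻ (f·log(f/g))₋`. -/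
theorem stmt6 {Ω : Type*} [MeasurableSpace Ω] (μ : Measure Ω)
    (f g : Ω → ℝ) (hfm : Measurable f) (hgm : Measurable g)
    (hf0 : ∀ x, 0 ≤ f x) (hg0 : ∀ x, 0 ≤ g x)
    (hfint : ∫ x, f x ∂μ = 1) (hgint : ∫ x, g x ∂μ = 1)
    (hgpos : ∀ᵐ x ∂μ, 0 < g x)
    (hchi : Integrable (fun x => (f x - g x) ^ 2 / g x) μ) :
    (∫⁻ x, ENNReal.ofReal (f x * Real.log (f x / g x)) ∂μ) < ⊤ ∧
    (∫⁻ x, ENNReal.ofReal (f x * Real.log (f x / g x)) ∂μ) ≤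
      ENNReal.ofReal (∫ x, (f x - g x) ^ 2 / g x ∂μ) +
        ∫⁻ x, ENNReal.ofReal (-(f x * Real.log (f x / g x))) ∂μ :=
  stmt6_general μ f g hf0 hfint hgint hgpos hchi
end

section
/- Let (Ω, μ) be a measure space and let f, g: Ω → [0, ∞) be measurable functions with ∫ f dμ = ∫ g dμ = 1 and g(x) ≥ 1/2 for μ-almost every x. Then the Kullback–Leibler divergence satisfies KL(f‖g) := ∫ f·log(f/g) dμ ≤ 2 ∫ (f − g)² dμ, where the right-hand side may be +∞ and the convention f·log(f/g) = 0 on {f = 0} is used. -/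
/-!
Since `log t ≤ t - 1`, pointwise
`f log (f/g) ≤ f (f - g)/g = (f - g)²/g + (f - g) ≤ 2 (f - g)² + (f - g)` when `g ≥ 1/2`.
The linear term `f - g` integrates to zero, so integrating the pointwise bound, with positive and
negative parts kept apart in `ℝ≥0∞`, gives the inequality even when the integrals involved are
infinite.
-/

open MeasureTheory Real

theorem Real.mul_log_div_le_sq_div_add_sub {a b : ℝ} (ha : 0 ≤ a) (hb : 0 < b) :
    a * log (a / b) ≤ (a - b) ^ 2 / b + (a - b) := by
  rcases ha.eq_or_lt with rfl | ha
  · simp [field]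
  calc a * log (a / b) ≤ a * (a / b - 1) :=
        mul_le_mul_of_nonneg_left (log_le_sub_one_of_pos (by positivity)) ha.le
    _ = (a - b) ^ 2 / b + (a - b) := by field_simp; ring

theorem ENNReal.ofReal_add_ofReal_neg_le_of_le_add {x y z : ℝ} (h : x ≤ y + z) :
    ENNReal.ofReal x + ENNReal.ofReal (-z) ≤
      ENNReal.ofReal y + ENNReal.ofReal z + ENNReal.ofReal (-x) := by
  have hsplit : max x 0 + max (-z) 0 ≤ y + max z 0 + max (-x) 0 := by grind
  calc ENNReal.ofReal x + ENNReal.ofReal (-z)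
      = ENNReal.ofReal (max x 0 + max (-z) 0) := by
        rw [ENNReal.ofReal_add (le_max_right _ _) (le_max_right _ _)]; simp
    _ ≤ ENNReal.ofReal (y + max z 0 + max (-x) 0) := ENNReal.ofReal_le_ofReal hsplit
    _ ≤ ENNReal.ofReal y + ENNReal.ofReal (max z 0) + ENNReal.ofReal (max (-x) 0) := by
        grw [ENNReal.ofReal_add_le, ENNReal.ofReal_add_le]
    _ = _ := by simp

section

variable {Ω : Type*} [MeasurableSpace Ω] {μ : Measure Ω}

theorem lintegral_ofReal_eq_lintegral_ofReal_neg_of_integral_eq_zero {h : Ω → ℝ}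
    (hh : Integrable h μ) (hh0 : ∫ x, h x ∂μ = 0) :
    ∫⁻ x, ENNReal.ofReal (h x) ∂μ = ∫⁻ x, ENNReal.ofReal (-h x) ∂μ := by
  have hpos := (lintegral_ofReal_le_lintegral_enorm h).trans_lt hh.2
  have hneg := (lintegral_ofReal_le_lintegral_enorm (-h)).trans_lt hh.neg.2
  rw [integral_eq_lintegral_pos_part_sub_lintegral_neg_part hh, sub_eq_zero] at hh0
  exact (ENNReal.toReal_eq_toReal_iff' hpos.ne hneg.ne).1 hh0

theorem lintegral_ofReal_le_of_le_add_integral_eq_zero {φ ψ h : Ω → ℝ}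
    (hφ : AEMeasurable φ μ) (hh : Integrable h μ) (hh0 : ∫ x, h x ∂μ = 0)
    (hle : ∀ᵐ x ∂μ, φ x ≤ ψ x + h x) :
    ∫⁻ x, ENNReal.ofReal (φ x) ∂μ ≤
      ∫⁻ x, ENNReal.ofReal (ψ x) ∂μ + ∫⁻ x, ENNReal.ofReal (-φ x) ∂μ := by
  have hneg_fin : ∫⁻ x, ENNReal.ofReal (-h x) ∂μ ≠ ⊤ :=
    ((lintegral_ofReal_le_lintegral_enorm (-h)).trans_lt hh.neg.2).ne
  have hsum := (le_lintegral_add _ _).trans <| lintegral_mono_ae <|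
    hle.mono fun x hx ↦ ENNReal.ofReal_add_ofReal_neg_le_of_le_add hx
  rw [lintegral_add_right' _ (by fun_prop), lintegral_add_right' _ (by fun_prop),
    lintegral_ofReal_eq_lintegral_ofReal_neg_of_integral_eq_zero hh hh0, add_right_comm] at hsum
  exact (ENNReal.add_le_add_iff_right hneg_fin).1 hsum

end

theorem stmt7_general {Ω : Type*} [MeasurableSpace Ω] (μ : Measure Ω)
    (f g : Ω → ℝ)
    (hf0 : ∀ x, 0 ≤ f x)
    (hfint : ∫ x, f x ∂μ = 1) (hgint : ∫ x, g x ∂μ = 1)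
    (hghalf : ∀ᵐ x ∂μ, 1 / 2 ≤ g x) :
    (∫⁻ x, ENNReal.ofReal (f x * Real.log (f x / g x)) ∂μ) ≤
      2 * (∫⁻ x, ENNReal.ofReal ((f x - g x) ^ 2) ∂μ) +
        ∫⁻ x, ENNReal.ofReal (-(f x * Real.log (f x / g x))) ∂μ := by
  have hf : Integrable f μ := .of_integral_ne_zero (by simp [hfint])
  have hg : Integrable g μ := .of_integral_ne_zero (by simp [hgint])
  have hpointwise : ∀ᵐ x ∂μ,
      f x * log (f x / g x) ≤ 2 * (f x - g x) ^ 2 + (f x - g x) := by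
    filter_upwards [hghalf] with x hx
    have hg0 : 0 < g x := by linarith
    have hsq : (f x - g x) ^ 2 / g x ≤ 2 * (f x - g x) ^ 2 := by
      rw [div_le_iff₀ hg0]; nlinarith [sq_nonneg (f x - g x)]
    linarith [mul_log_div_le_sq_div_add_sub (hf0 x) hg0]
  have hbound := lintegral_ofReal_le_of_le_add_integral_eq_zero
    (ψ := fun x ↦ 2 * (f x - g x) ^ 2)
    (hf.aemeasurable.mul (hf.aemeasurable.div hg.aemeasurable).log) (hf.sub hg)
    (by rw [Pi.sub_def, integral_sub hf hg, hfint, hgint, sub_self]) hpointwise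
  simp_rw [ENNReal.ofReal_mul zero_le_two, ENNReal.ofReal_ofNat] at hbound
  rwa [lintegral_const_mul' _ _ ENNReal.ofNat_ne_top] at hbound

/-- For probability densities `f, g` with `g ≥ 1/2` a.e., the Kullback–Leibler
divergence `KL(f‖g) = ∫ f·log(f/g) dμ` (with the convention `f·log(f/g) = 0` on `{f = 0}`, which
is automatic) satisfies `KL(f‖g) ≤ 2 ∫ (f−g)² dμ`, where the right-hand side may be `+∞`.  This
is expressed in the extended sense as
`∫⁻ (f·log(f/g))₊ ≤ 2 ∫⁻ (f−g)² + ∫⁻ (f·log(f/g))₋`. -/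
theorem stmt7 {Ω : Type*} [MeasurableSpace Ω] (μ : Measure Ω)
    (f g : Ω → ℝ) (hfm : Measurable f) (hgm : Measurable g)
    (hf0 : ∀ x, 0 ≤ f x) (hg0 : ∀ x, 0 ≤ g x)
    (hfint : ∫ x, f x ∂μ = 1) (hgint : ∫ x, g x ∂μ = 1)
    (hghalf : ∀ᵐ x ∂μ, 1 / 2 ≤ g x) :
    (∫⁻ x, ENNReal.ofReal (f x * Real.log (f x / g x)) ∂μ) ≤
      2 * (∫⁻ x, ENNReal.ofReal ((f x - g x) ^ 2) ∂μ) +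
        ∫⁻ x, ENNReal.ofReal (-(f x * Real.log (f x / g x))) ∂μ :=
  stmt7_general μ f g hf0 hfint hgint hghalf
end

section
/- Let d ≥ 1 and 0 < c₁ ≤ c₂ be constants. There exists a constant C > 0, depending only on d, c₁ and c₂ (and not on ℓ), such that for every ℓ ∈ ℕ with ℓ ≥ 1, every weight function w: V_ℓ → ℝ with c₁ ≤ w(v) ≤ c₂ for all v ∈ V_ℓ, and every function g: V_ℓ → ℝ, one has Σ_{v ∈ V_ℓ} |g(v) − ḡ_w|² ≤ C ℓ² Σ_{(v, ṽ): v, ṽ ∈ V_ℓ, v ∼ ṽ} |g(v) − g(ṽ)|², where ḡ_w := (Σ_{v ∈ V_ℓ} g(v) w(v)) / (Σ_{v ∈ V_ℓ} w(v)). -/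
/-!
The weighted mean is a convex combination of the values of `g` with weights at most
`c₂ / (c₁ ℓ^d)`, so `∑_v (g v - ḡ_w)² ≤ c₂ / (c₁ ℓ^d) ∑_{v,u} (g v - g u)²`.
To compare `g v` with `g u`, change the coordinates of `v` into those of `u` one at a time,
each change running along a line of the grid; by Cauchy–Schwarz, `(g v - g u)²` is at most
`d (ℓ - 1)` times the sum of the energies of `g` on the `d` lines used. As `(v, u)` ranges over
all pairs, each grid point is the `j`-th intermediate point for `ℓ^d` of them, and each line is
counted once from each of its `ℓ` points, which gives
`∑_{v,u} (g v - g u)² ≤ d (ℓ - 1) ℓ^(d+1) ∑_{v ∼ ṽ} (g v - g ṽ)²` and `C = d c₂ / c₁`.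
-/

open Finset Function

lemma Fin.abs_sub_le_sum_abs_succ_sub {m : ℕ} (h : Fin (m + 1) → ℝ) (a b : Fin (m + 1)) :
    |h a - h b| ≤ ∑ t : Fin m, |h t.succ - h t.castSucc| := by
  wlog hab : a ≤ b generalizing a b
  · rw [abs_sub_comm]
    exact this b a (le_of_not_ge hab)
  set f : ℕ → ℝ := fun n => h (Fin.clamp n m)
  have hf : ∀ x : Fin (m + 1), f x = h x := fun x => by
    simp only [f]
    congr 1
    exact Fin.ext (by simp [Fin.clamp, Nat.le_of_lt_succ x.isLt])
  calc |h a - h b| = dist (f a) (f b) := by rw [Real.dist_eq, hf, hf]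
    _ ≤ ∑ i ∈ Ico (a : ℕ) b, dist (f i) (f (i + 1)) := dist_le_Ico_sum_dist f hab
    _ ≤ ∑ i ∈ range m, dist (f i) (f (i + 1)) := by
        refine sum_le_sum_of_subset_of_nonneg ?_ fun _ _ _ => dist_nonneg
        intro i
        simp only [mem_Ico, mem_range]
        omega
    _ = ∑ t : Fin m, |h t.succ - h t.castSucc| := by
        rw [← Fin.sum_univ_eq_sum_range]
        refine sum_congr rfl fun t _ => ?_
        rw [Real.dist_eq, abs_sub_comm, show f (t + 1) = h t.succ from hf t.succ,
          show f t = h t.castSucc from hf t.castSucc]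

lemma Fin.sq_sub_le_mul_sum_sq_succ_sub {m : ℕ} (h : Fin (m + 1) → ℝ) (a b : Fin (m + 1)) :
    (h a - h b) ^ 2 ≤ m * ∑ t : Fin m, (h t.succ - h t.castSucc) ^ 2 := by
  calc (h a - h b) ^ 2 = |h a - h b| ^ 2 := (sq_abs _).symm
    _ ≤ (∑ t : Fin m, |h t.succ - h t.castSucc|) ^ 2 := by
        gcongr
        exact Fin.abs_sub_le_sum_abs_succ_sub h a b
    _ ≤ m * ∑ t : Fin m, |h t.succ - h t.castSucc| ^ 2 := by
        simpa using sq_sum_le_card_mul_sum_sq (s := univ)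
          (f := fun t : Fin m => |h t.succ - h t.castSucc|)
    _ = m * ∑ t : Fin m, (h t.succ - h t.castSucc) ^ 2 := by simp_rw [sq_abs]

section Splice

variable {d : ℕ} {α : Type*}

def splice (v u : Fin d → α) (k : ℕ) : Fin d → α :=
  fun i => if (i : ℕ) < k then u i else v i

@[simp]
lemma splice_zero (v u : Fin d → α) : splice v u 0 = v := by
  ext i
  simp [splice]

lemma splice_of_le (v u : Fin d → α) {k : ℕ} (hk : d ≤ k) : splice v u k = u := by
  ext i
  simp [splice, i.isLt.trans_le hk]

lemma splice_apply_self (v u : Fin d → α) (j : Fin d) : splice v u j j = v j := by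
  simp [splice]

lemma splice_succ (v u : Fin d → α) (j : Fin d) :
    splice v u (j + 1) = update (splice v u j) j (u j) := by
  ext i
  rcases eq_or_ne i j with rfl | hij
  · simp [splice]
  · have : (i : ℕ) ≠ j := Fin.val_ne_of_ne hij
    simp only [splice, update_of_ne hij]
    split_ifs <;> first | rfl | omega

lemma splice_involutive (k : ℕ) :
    Involutive fun p : (Fin d → α) × (Fin d → α) => (splice p.1 p.2 k, splice p.2 p.1 k) := by
  rintro ⟨v, u⟩
  ext i <;> by_cases h : (i : ℕ) < k <;> simp [splice, h]

lemma sum_sum_splice [Fintype α] (k : ℕ) (F : (Fin d → α) → ℝ) :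
    ∑ v, ∑ u, F (splice v u k) = Fintype.card α ^ d * ∑ y, F y := by
  rw [← Fintype.sum_prod_type' (fun v u => F (splice v u k)),
    Fintype.sum_bijective _ (splice_involutive k).bijective _ (fun p => F p.1) fun _ => rfl,
    Fintype.sum_prod_type, mul_sum]
  simp

end Splice

lemma sum_update_eq_card_mul_sum {ι α : Type*} [Fintype ι] [DecidableEq ι] [Fintype α]
    [DecidableEq α] (j : ι) (c : α) (F : (ι → α) → ℝ) :
    ∑ y, F (update y j c) = Fintype.card α * ∑ y with y j = c, F y := by
  have hinv : Involutive fun p : (ι → α) × α => (update p.1 j p.2, p.1 j) := by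
    rintro ⟨y, b⟩
    simp
  calc ∑ y, F (update y j c)
      = ∑ p : (ι → α) × α, if p.2 = c then F (update p.1 j p.2) else 0 := by
        rw [Fintype.sum_prod_type]
        simp
    _ = ∑ p : (ι → α) × α, if p.1 j = c then F p.1 else 0 :=
        Fintype.sum_bijective _ hinv.bijective _ _ fun _ => by simp
    _ = Fintype.card α * ∑ y with y j = c, F y := by
        rw [Fintype.sum_prod_type, sum_filter, mul_sum]
        simp

def gridEnergy {d ℓ : ℕ} (g : (Fin d → Fin ℓ) → ℝ) : ℝ :=
  ∑ v : Fin d → Fin ℓ, ∑ v' : Fin d → Fin ℓ,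
    if (∑ i, (((v i : ℕ) : ℤ) - ((v' i : ℕ) : ℤ)) ^ 2) ≤ 1 then (g v - g v') ^ 2 else 0

lemma gridEnergy_nonneg {d ℓ : ℕ} (g : (Fin d → Fin ℓ) → ℝ) : 0 ≤ gridEnergy g :=
  sum_nonneg fun _ _ => sum_nonneg fun _ _ => by split_ifs <;> positivity

section Grid

variable {d m : ℕ}

def lineEnergy (g : (Fin d → Fin (m + 1)) → ℝ) (j : Fin d) (y : Fin d → Fin (m + 1)) : ℝ :=
  ∑ t : Fin m, (g (update y j t.succ) - g (update y j t.castSucc)) ^ 2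

lemma sq_sub_le_sum_lineEnergy (g : (Fin d → Fin (m + 1)) → ℝ) (v u : Fin d → Fin (m + 1)) :
    (g v - g u) ^ 2 ≤ d * m * ∑ j : Fin d, lineEnergy g j (splice v u j) := by
  have step (j : Fin d) :
      (g (splice v u j) - g (splice v u (j + 1))) ^ 2 ≤ m * lineEnergy g j (splice v u j) := by
    have := Fin.sq_sub_le_mul_sum_sq_succ_sub (fun c => g (update (splice v u j) j c)) (v j) (u j)
    rwa [← splice_apply_self v u j, update_eq_self, ← splice_succ] at this
  have telescope : g v - g u = ∑ j : Fin d, (g (splice v u j) - g (splice v u (j + 1))) := by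
    rw [Fin.sum_univ_eq_sum_range (fun k => g (splice v u k) - g (splice v u (k + 1))),
      sum_range_sub', splice_zero, splice_of_le v u le_rfl]
  calc (g v - g u) ^ 2 = (∑ j : Fin d, (g (splice v u j) - g (splice v u (j + 1)))) ^ 2 := by
        rw [telescope]
    _ ≤ d * ∑ j : Fin d, (g (splice v u j) - g (splice v u (j + 1))) ^ 2 := by
        simpa using sq_sum_le_card_mul_sum_sq (s := univ)
          (f := fun j : Fin d => g (splice v u j) - g (splice v u (j + 1)))
    _ ≤ d * ∑ j : Fin d, m * lineEnergy g j (splice v u j) := by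
        gcongr with j
        exact step j
    _ = d * m * ∑ j : Fin d, lineEnergy g j (splice v u j) := by rw [← mul_sum, mul_assoc]

lemma sum_lineEnergy (g : (Fin d → Fin (m + 1)) → ℝ) (j : Fin d) :
    ∑ y, lineEnergy g j y =
      (m + 1) * ∑ t : Fin m, ∑ y with y j = t.castSucc, (g (update y j t.succ) - g y) ^ 2 := by
  simp only [lineEnergy]
  rw [sum_comm, mul_sum]
  refine sum_congr rfl fun t _ => ?_
  simpa [update_idem] using
    sum_update_eq_card_mul_sum j t.castSucc fun z => (g (update z j t.succ) - g z) ^ 2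

lemma sum_sq_sub_edges_le_gridEnergy (g : (Fin d → Fin (m + 1)) → ℝ) :
    ∑ j : Fin d, ∑ t : Fin m, ∑ y with y j = t.castSucc, (g (update y j t.succ) - g y) ^ 2 ≤
      gridEnergy g := by
  set S := ({p | p.2.2 p.1 = p.2.1.castSucc} : Finset (Fin d × Fin m × (Fin d → Fin (m + 1))))
  set edge : Fin d × Fin m × (Fin d → Fin (m + 1)) →
      (Fin d → Fin (m + 1)) × (Fin d → Fin (m + 1)) := fun p => (update p.2.2 p.1 p.2.1.succ, p.2.2)
  have hinj : Set.InjOn edge S := by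
    rintro ⟨j, t, y⟩ hp ⟨j', t', y'⟩ hp' heq
    simp only [S, coe_filter, mem_univ, true_and, Set.mem_ofPred_eq] at hp hp'
    simp only [edge, Prod.mk.injEq] at heq
    obtain ⟨hupd, rfl⟩ := heq
    have hj := congrFun hupd j
    rcases eq_or_ne j j' with rfl | hjj
    · simp_all
    · rw [update_self, update_of_ne hjj, hp] at hj
      exact absurd (congrArg Fin.val hj) (by simp)
  have hadj : ∀ p ∈ S, (∑ i, ((((edge p).1 i : ℕ) : ℤ) - (((edge p).2 i : ℕ) : ℤ)) ^ 2) ≤ 1 := by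
    rintro ⟨j, t, y⟩ hp
    simp only [S, mem_filter, mem_univ, true_and] at hp
    rw [sum_eq_single j (fun i _ hij => by simp [edge, update_of_ne hij]) (by simp)]
    simp [edge, hp]
  calc _ = ∑ p ∈ S, (g (edge p).1 - g (edge p).2) ^ 2 := by
        simp only [S, edge, sum_filter, Fintype.sum_prod_type]
    _ = ∑ q ∈ S.image edge, (g q.1 - g q.2) ^ 2 :=
        (sum_image (f := fun q => (g q.1 - g q.2) ^ 2) hinj).symm
    _ ≤ ∑ q ∈ univ.filter fun q : (Fin d → Fin (m + 1)) × (Fin d → Fin (m + 1)) =>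
          (∑ i, (((q.1 i : ℕ) : ℤ) - ((q.2 i : ℕ) : ℤ)) ^ 2) ≤ 1, (g q.1 - g q.2) ^ 2 := by
        refine sum_le_sum_of_subset_of_nonneg ?_ fun _ _ _ => sq_nonneg _
        simp only [subset_iff, mem_image, mem_filter, mem_univ, true_and]
        rintro _ ⟨p, hp, rfl⟩
        exact hadj p hp
    _ = gridEnergy g := by
        rw [sum_filter, Fintype.sum_prod_type]
        rfl

theorem sum_sum_sq_sub_le_gridEnergy (g : (Fin d → Fin (m + 1)) → ℝ) :
    ∑ v, ∑ u, (g v - g u) ^ 2 ≤ d * m * (m + 1) ^ (d + 1) * gridEnergy g := by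
  calc ∑ v, ∑ u, (g v - g u) ^ 2
      ≤ ∑ v, ∑ u, d * m * ∑ j : Fin d, lineEnergy g j (splice v u j) :=
        sum_le_sum fun v _ => sum_le_sum fun u _ => sq_sub_le_sum_lineEnergy g v u
    _ = d * m * ∑ j : Fin d, ∑ v, ∑ u, lineEnergy g j (splice v u j) := by
        simp_rw [← mul_sum]
        exact congrArg _ ((sum_congr rfl fun v _ => sum_comm).trans sum_comm)
    _ = d * m * (m + 1) ^ (d + 1) * ∑ j : Fin d, ∑ t : Fin m,
          ∑ y with y j = t.castSucc, (g (update y j t.succ) - g y) ^ 2 := by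
        simp_rw [sum_sum_splice, sum_lineEnergy, mul_sum]
        simp [pow_succ, mul_assoc]
    _ ≤ d * m * (m + 1) ^ (d + 1) * gridEnergy g := by
        gcongr
        exact sum_sq_sub_edges_le_gridEnergy g

end Grid

lemma sq_sub_weightedMean_le {ι : Type*} [Fintype ι] {c₁ c₂ : ℝ} (hc₁ : 0 < c₁)
    (w g : ι → ℝ) (hw : ∀ i, c₁ ≤ w i ∧ w i ≤ c₂) (v : ι) :
    (g v - (∑ i, g i * w i) / ∑ i, w i) ^ 2 ≤
      c₂ / (c₁ * Fintype.card ι) * ∑ u, (g v - g u) ^ 2 := by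
  set W := ∑ i, w i
  have hW : c₁ * Fintype.card ι ≤ W := by
    simpa [mul_comm] using sum_le_sum fun i (_ : i ∈ univ) => (hw i).1
  have hN : (0 : ℝ) < Fintype.card ι := by exact_mod_cast Fintype.card_pos_iff.mpr ⟨v⟩
  have hWpos : 0 < W := (by positivity : 0 < c₁ * Fintype.card ι).trans_le hW
  have hc₂ : 0 < c₂ := hc₁.trans_le ((hw v).1.trans (hw v).2)
  have hdev : g v - (∑ i, g i * w i) / W = (∑ u, w u * (g v - g u)) / W := by
    field_simp
    simp [mul_sub, sum_sub_distrib, ← sum_mul, W, mul_comm]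
  have hw₀ (u : ι) : 0 ≤ w u := (hc₁.trans_le (hw u).1).le
  have hCS : (∑ u, w u * (g v - g u)) ^ 2 ≤ W * ∑ u, w u * (g v - g u) ^ 2 :=
    sum_sq_le_sum_mul_sum_of_sq_le_mul _ (fun u _ => hw₀ u)
      (fun u _ => mul_nonneg (hw₀ u) (sq_nonneg _)) fun u _ => le_of_eq (by ring)
  have hweights : ∑ u, w u * (g v - g u) ^ 2 ≤ c₂ * ∑ u, (g v - g u) ^ 2 := by
    rw [mul_sum]
    exact sum_le_sum fun u _ => by gcongr; exact (hw u).2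
  calc (g v - (∑ i, g i * w i) / W) ^ 2 = (∑ u, w u * (g v - g u)) ^ 2 / W ^ 2 := by
        rw [hdev, div_pow]
    _ ≤ W * (∑ u, w u * (g v - g u) ^ 2) / W ^ 2 := by gcongr
    _ = (∑ u, w u * (g v - g u) ^ 2) / W := by field_simp
    _ ≤ c₂ * (∑ u, (g v - g u) ^ 2) / (c₁ * Fintype.card ι) :=
        div_le_div₀ (by positivity) hweights (by positivity) hW
    _ = _ := by ring

/-- Poincaré inequality for a weighted grid graph.  For the grid
`V_ℓ = {0,…,ℓ−1}^d` with adjacency `v ∼ ṽ ↔ |v − ṽ| ≤ 1` (Euclidean norm, i.e.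
`∑ i (vᵢ − ṽᵢ)² ≤ 1`), and any weight `w` with `c₁ ≤ w ≤ c₂`, one has
`∑_v |g(v) − ḡ_w|² ≤ C ℓ² ∑_{v ∼ ṽ} |g(v) − g(ṽ)|²` where
`ḡ_w = (∑ g(v) w(v)) / (∑ w(v))`, with `C` depending only on `d, c₁, c₂`. -/
theorem stmt8 (d : ℕ) (hd : 1 ≤ d) (c₁ c₂ : ℝ) (hc₁ : 0 < c₁) (hcc : c₁ ≤ c₂) :
    ∃ C : ℝ, 0 < C ∧
      ∀ (ℓ : ℕ), 1 ≤ ℓ →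
      ∀ (w g : (Fin d → Fin ℓ) → ℝ),
      (∀ v, c₁ ≤ w v ∧ w v ≤ c₂) →
      (∑ v : Fin d → Fin ℓ,
          (g v - (∑ v' : Fin d → Fin ℓ, g v' * w v') / ∑ v' : Fin d → Fin ℓ, w v') ^ 2) ≤
        C * (ℓ : ℝ) ^ 2 *
          ∑ v : Fin d → Fin ℓ, ∑ v' : Fin d → Fin ℓ,
            (if (∑ i, (((v i : ℕ) : ℤ) - ((v' i : ℕ) : ℤ)) ^ 2) ≤ 1
              then (g v - g v') ^ 2 else 0) := by
  have hd₀ : (0 : ℝ) < d := by exact_mod_cast hd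
  have hc₂ : 0 < c₂ := hc₁.trans_le hcc
  refine ⟨d * c₂ / c₁, by positivity, fun ℓ hℓ w g hw => ?_⟩
  obtain ⟨m, rfl⟩ := Nat.exists_eq_add_of_le' hℓ
  have hcard : (Fintype.card (Fin d → Fin (m + 1)) : ℝ) = (m + 1) ^ d := by simp
  calc _ ≤ ∑ v, c₂ / (c₁ * (m + 1) ^ d) * ∑ u, (g v - g u) ^ 2 :=
        sum_le_sum fun v _ => hcard ▸ sq_sub_weightedMean_le hc₁ w g hw v
    _ ≤ c₂ / (c₁ * (m + 1) ^ d) * (d * m * (m + 1) ^ (d + 1) * gridEnergy g) := by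
        rw [← mul_sum]
        gcongr
        exact sum_sum_sq_sub_le_gridEnergy g
    _ = d * c₂ / c₁ * (m * (m + 1)) * gridEnergy g := by
        field_simp
        ring
    _ ≤ d * c₂ / c₁ * ((m + 1 : ℕ) : ℝ) ^ 2 * gridEnergy g := by
        gcongr
        · exact gridEnergy_nonneg g
        · push_cast
          nlinarith
end

section
/- Let d ≥ 1. There exists a constant c ∈ (0,1) depending only on d such that for every ℓ ∈ ℕ with ℓ ≥ 1 and every nonempty subset S ⊆ V_ℓ with |S| ≤ ℓ^d / 2, the number of ordered pairs (v, ṽ) with v ∈ S, ṽ ∈ V_ℓ \ S, and |v − ṽ| = 1 is at least c·|S|/ℓ. -/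
/-!
Canonical paths: to go from `v` to `w` in the grid, change the coordinates one at a time, in
increasing order, each by unit steps. If `v ∈ S` and `w ∉ S`, this path leaves `S` through some
edge `(x, y)` in direction `j`; then `x` agrees with `w` below `j` and with `v` above `j`, so a
given edge is crossed by at most `ℓ ^ (d + 1)` of the canonical paths. Hence
`|S| · |Sᶜ| ≤ ℓ ^ (d + 1) · |∂S|`, and `|Sᶜ| ≥ ℓ ^ d / 2` gives `|∂S| ≥ |S| / (2ℓ)`.
-/

open Finset

lemma Nat.exists_crossing (P : ℕ → Prop) {a b : ℕ} (hab : a ≤ b) (ha : P a) (hb : ¬P b) :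
    ∃ k, a ≤ k ∧ k < b ∧ P k ∧ ¬P (k + 1) := by
  classical
  have hk : P (Nat.findGreatest P b) := Nat.findGreatest_spec hab ha
  have hkb : Nat.findGreatest P b < b :=
    (Nat.findGreatest_le b).lt_of_ne fun he => hb (he ▸ hk)
  exact ⟨_, Nat.le_findGreatest hab ha, hkb, hk,
    Nat.findGreatest_is_greatest (Nat.lt_succ_self _) hkb⟩

lemma Fin.exists_adjacent_crossing {ℓ : ℕ} (P : Fin ℓ → Prop) {a b : Fin ℓ} (ha : P a)
    (hb : ¬P b) : ∃ s t : Fin ℓ, P s ∧ ¬P t ∧ (((s : ℕ) : ℤ) - ((t : ℕ) : ℤ)) ^ 2 = 1 := by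
  rcases le_or_gt (a : ℕ) b with hab | hba
  · obtain ⟨k, -, hkb, ⟨hk, hPk⟩, hk1⟩ := Nat.exists_crossing (fun n => ∃ h : n < ℓ, P ⟨n, h⟩)
      hab ⟨a.isLt, ha⟩ fun ⟨_, h⟩ => hb h
    have hk1ℓ : k + 1 < ℓ := by have := b.isLt; omega
    refine ⟨⟨k, hk⟩, ⟨k + 1, hk1ℓ⟩, hPk, fun h => hk1 ⟨hk1ℓ, h⟩, ?_⟩
    push_cast; ring
  · obtain ⟨k, -, -, hk, hk1⟩ := Nat.exists_crossing (fun n => ¬∃ h : n < ℓ, P ⟨n, h⟩)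
      hba.le (fun ⟨_, h⟩ => hb h) (not_not.2 ⟨a.isLt, ha⟩)
    obtain ⟨hk1ℓ, hPk1⟩ := not_not.1 hk1
    have hkℓ : k < ℓ := by omega
    refine ⟨⟨k + 1, hk1ℓ⟩, ⟨k, hkℓ⟩, hPk1, fun h => hk ⟨hkℓ, h⟩, ?_⟩
    push_cast; ring

section Grid

variable {d ℓ : ℕ}

def IsGridStep (j : Fin d) (x y : Fin d → Fin ℓ) : Prop :=
  (∀ m, m ≠ j → x m = y m) ∧ (((x j : ℕ) : ℤ) - ((y j : ℕ) : ℤ)) ^ 2 = 1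

lemma IsGridStep.sum_sq_sub_eq_one {j : Fin d} {x y : Fin d → Fin ℓ} (h : IsGridStep j x y) :
    ∑ i, (((x i : ℕ) : ℤ) - ((y i : ℕ) : ℤ)) ^ 2 = 1 := by
  rw [Finset.sum_eq_single_of_mem j (mem_univ j) fun m _ hm => by rw [h.1 m hm]; ring]
  exact h.2

lemma IsGridStep.eq_of_isGridStep {j j' : Fin d} {x y : Fin d → Fin ℓ} (h : IsGridStep j x y)
    (h' : IsGridStep j' x y) : j = j' := by
  by_contra hne
  have := h'.2
  rw [h.1 j' (Ne.symm hne)] at this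
  simp at this

/-- The corners of the canonical path from `v` to `w`. -/
def sweep {α : Type*} (v w : Fin d → α) (i : ℕ) : Fin d → α :=
  fun m => if (m : ℕ) < i then w m else v m

section Sweep

variable {α : Type*} (v w : Fin d → α)

@[simp] lemma sweep_zero : sweep v w 0 = v := by
  funext m; simp [sweep]

@[simp] lemma sweep_self : sweep v w d = w := by
  funext m; simp [sweep]

lemma update_sweep_self (j : Fin d) : Function.update (sweep v w j) j (v j) = sweep v w j := by
  funext m; rcases eq_or_ne m j with rfl | hm <;> simp_all [sweep]

lemma update_sweep_succ (j : Fin d) :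
    Function.update (sweep v w j) j (w j) = sweep v w (j + 1) := by
  funext m
  rcases eq_or_ne m j with rfl | hm
  · simp [sweep]
  · have : (m : ℕ) ≠ j := Fin.val_ne_of_ne hm
    simp only [sweep, Function.update_of_ne hm]
    split_ifs <;> first | rfl | omega

end Sweep

lemma exists_isGridStep_crossing (S : Finset (Fin d → Fin ℓ)) {v w : Fin d → Fin ℓ}
    (hv : v ∈ S) (hw : w ∉ S) :
    ∃ j x y, x ∈ S ∧ y ∉ S ∧ IsGridStep j x y ∧
      (∀ m, m < j → x m = w m) ∧ (∀ m, j < m → x m = v m) := by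
  obtain ⟨i, -, hid, hi, hi1⟩ := Nat.exists_crossing (sweep v w · ∈ S) (Nat.zero_le d)
    (by simpa using hv) (by simpa using hw)
  set j : Fin d := ⟨i, hid⟩
  set line : Fin ℓ → Fin d → Fin ℓ := Function.update (sweep v w j) j
  obtain ⟨s, t, hs, ht, hst⟩ := Fin.exists_adjacent_crossing (line · ∈ S)
    (a := v j) (by simpa [line, update_sweep_self] using hi)
    (b := w j) (by simpa [line, update_sweep_succ] using hi1)
  refine ⟨j, line s, line t, hs, ht, ⟨fun m hm => ?_, by simpa [line] using hst⟩,
    fun m hm => ?_, fun m hm => ?_⟩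
  · simp [line, Function.update_of_ne hm]
  · simp [line, Function.update_of_ne hm.ne, sweep, Fin.lt_def.1 hm]
  · have : ¬(m : ℕ) < i := not_lt.2 (Fin.lt_def.1 hm).le
    simp only [line, Function.update_of_ne hm.ne', sweep, j, if_neg this]

/-- The pairs `(v, w)` whose canonical path can leave a set through an edge at `x` in
direction `j`. -/
def sweepFiber {α : Type*} [Fintype α] [DecidableEq α] (j : Fin d) (x : Fin d → α) :
    Finset ((Fin d → α) × (Fin d → α)) :=
  univ.filter fun p => (∀ m, m < j → x m = p.2 m) ∧ (∀ m, j < m → x m = p.1 m)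

lemma card_sweepFiber_le {α : Type*} [Fintype α] [DecidableEq α] (j : Fin d) (x : Fin d → α) :
    #(sweepFiber j x) ≤ Fintype.card α ^ (d + 1) := by
  let encode : (Fin d → α) × (Fin d → α) → (Fin d → α) × α :=
    fun p => (fun m => if m ≤ j then p.1 m else p.2 m, p.2 j)
  have hinj : Set.InjOn encode (sweepFiber j x) := by
    intro p hp p' hp' he
    simp only [sweepFiber, mem_coe, mem_filter, mem_univ, true_and] at hp hp'
    have h1 (m) := congrFun (congrArg Prod.fst he) m
    have h2 : p.2 j = p'.2 j := congrArg Prod.snd he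
    ext m
    · rcases le_or_gt m j with hm | hm
      · simpa [encode, hm] using h1 m
      · rw [← hp.2 m hm, ← hp'.2 m hm]
    · rcases lt_trichotomy m j with hm | rfl | hm
      · rw [← hp.1 m hm, ← hp'.1 m hm]
      · exact h2
      · simpa [encode, not_le.2 hm] using h1 m
  calc #(sweepFiber j x) ≤ #(univ : Finset ((Fin d → α) × α)) :=
        card_le_card_of_injOn encode (fun _ _ => mem_univ _) hinj
    _ = Fintype.card α ^ (d + 1) := by simp [pow_succ]

def edgeBoundary (S : Finset (Fin d → Fin ℓ)) : Finset ((Fin d → Fin ℓ) × (Fin d → Fin ℓ)) :=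
  (S ×ˢ Sᶜ).filter fun p => (∑ i, (((p.1 i : ℕ) : ℤ) - ((p.2 i : ℕ) : ℤ)) ^ 2) = 1

lemma card_mul_card_compl_le (S : Finset (Fin d → Fin ℓ)) :
    #S * #Sᶜ ≤ ℓ ^ (d + 1) * #(edgeBoundary S) := by
  classical
  let steps := (univ ×ˢ (S ×ˢ Sᶜ)).filter fun q : Fin d × _ => IsGridStep q.1 q.2.1 q.2.2
  have hcover : S ×ˢ Sᶜ ⊆ steps.biUnion fun q => sweepFiber q.1 q.2.1 := by
    rintro ⟨v, w⟩ hp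
    rw [mem_product, mem_compl] at hp
    obtain ⟨j, x, y, hx, hy, hstep, hw, hv⟩ := exists_isGridStep_crossing S hp.1 hp.2
    simp only [mem_biUnion, steps, mem_filter, mem_product, mem_univ, mem_compl, sweepFiber]
    exact ⟨(j, x, y), ⟨⟨trivial, hx, hy⟩, hstep⟩, trivial, hw, hv⟩
  have hsteps : #steps ≤ #(edgeBoundary S) := by
    refine card_le_card_of_injOn Prod.snd (fun q hq => ?_) fun q hq q' hq' he => ?_
    · simp only [steps, mem_coe, mem_filter, mem_product] at hq
      simp only [edgeBoundary, mem_coe, mem_filter, mem_product]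
      exact ⟨hq.1.2, hq.2.sum_sq_sub_eq_one⟩
    · simp only [steps, mem_coe, mem_filter] at hq hq'
      rw [he] at hq
      exact Prod.ext (hq.2.eq_of_isGridStep hq'.2) he
  calc #S * #Sᶜ = #(S ×ˢ Sᶜ) := (card_product _ _).symm
    _ ≤ ∑ q ∈ steps, #(sweepFiber q.1 q.2.1) := (card_le_card hcover).trans card_biUnion_le
    _ ≤ #steps * ℓ ^ (d + 1) := sum_le_card_nsmul _ _ _ fun q _ => by
        simpa using card_sweepFiber_le q.1 q.2.1
    _ ≤ ℓ ^ (d + 1) * #(edgeBoundary S) := by rw [mul_comm]; gcongr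

end Grid

theorem stmt9_general (d : ℕ) :
    ∃ c : ℝ, 0 < c ∧ c < 1 ∧
      ∀ (ℓ : ℕ), 1 ≤ ℓ →
      ∀ S : Finset (Fin d → Fin ℓ), S.Nonempty → (S.card : ℝ) ≤ (ℓ : ℝ) ^ d / 2 →
        c * (S.card : ℝ) / (ℓ : ℝ) ≤
          (((S ×ˢ Sᶜ).filter
            (fun p => (∑ i, (((p.1 i : ℕ) : ℤ) - ((p.2 i : ℕ) : ℤ)) ^ 2) = 1)).card : ℝ) := by
  refine ⟨1 / 2, by norm_num, by norm_num, fun ℓ hℓ S _ hS => ?_⟩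
  have hℓ : (0 : ℝ) < ℓ := by exact_mod_cast hℓ
  have hcompl : (#Sᶜ : ℝ) = ℓ ^ d - #S := by
    rw [card_compl, Nat.cast_sub (card_le_univ S)]; simp
  have key : (#S : ℝ) * #Sᶜ ≤ ℓ ^ d * ℓ * #(edgeBoundary S) := by
    rw [← pow_succ]; exact_mod_cast card_mul_card_compl_le S
  rw [hcompl] at key
  change _ ≤ (#(edgeBoundary S) : ℝ)
  rw [div_le_iff₀ hℓ]
  nlinarith [pow_pos hℓ d, (#S).cast_nonneg (α := ℝ)]

/-- isoperimetric / Cheeger-type bound on the grid.  There is `c ∈ (0,1)`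
depending only on `d` such that for every `ℓ ≥ 1` and every nonempty `S ⊆ V_ℓ = {0,…,ℓ−1}^d`
with `|S| ≤ ℓ^d / 2`, the number of ordered pairs `(v, ṽ)` with `v ∈ S`, `ṽ ∉ S` and
`|v − ṽ| = 1` (i.e. `∑ i (vᵢ − ṽᵢ)² = 1`) is at least `c·|S|/ℓ`. -/
theorem stmt9 (d : ℕ) (hd : 1 ≤ d) :
    ∃ c : ℝ, 0 < c ∧ c < 1 ∧
      ∀ (ℓ : ℕ), 1 ≤ ℓ →
      ∀ S : Finset (Fin d → Fin ℓ), S.Nonempty → (S.card : ℝ) ≤ (ℓ : ℝ) ^ d / 2 →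
        c * (S.card : ℝ) / (ℓ : ℝ) ≤
          (((S ×ˢ Sᶜ).filter
            (fun p => (∑ i, (((p.1 i : ℕ) : ℤ) - ((p.2 i : ℕ) : ℤ)) ^ 2) = 1)).card : ℝ) :=
  stmt9_general d
end
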